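/- Let A > 0, 0 ≤ B < 1 with A² + B² = 1. Then (1/(4π)) ∫_{−π}^{π} |A/(1 − B·cos t) − A/(1 + B·cos t)| dt = (2/π)·arctan(B/A). -/

import Mathlib

/-!
Since `(1 - B cos t)(1 + B cos t) = A² + B² sin² t`, the integrand equals
`2AB |cos t| / (A² + B² sin² t)`, which on `[-π/2, π/2]` is the derivative of
`2 arctan (B sin t / A)`. The integrand is `π`-periodic, so the integral over `[-π, π]` is twice
the one over `[-π/2, π/2]`, namely `2 · 4 arctan (B / A)`.
-/

open Real Function MeasureTheory intervalIntegral

lemma abs_div_one_sub_sub_div_one_add {a x : ℝ} (ha : 0 ≤ a) (hx : |x| < 1) :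
    |a / (1 - x) - a / (1 + x)| = 2 * a * |x| / (1 - x ^ 2) := by
  obtain ⟨hx₁, hx₂⟩ := abs_lt.mp hx
  have hsub : 0 < 1 - x := by linarith
  have hadd : 0 < 1 + x := by linarith
  rw [div_sub_div _ _ hsub.ne' hadd.ne', abs_div, abs_of_pos (mul_pos hsub hadd),
    show a * (1 + x) - (1 - x) * a = 2 * a * x by ring, abs_mul, abs_of_nonneg (by positivity)]
  ring

lemma hasDerivAt_arctan_mul_sin_div {a : ℝ} (b : ℝ) (ha : a ≠ 0) (t : ℝ) :
    HasDerivAt (fun t => arctan (b * sin t / a))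
      (a * b * cos t / (a ^ 2 + b ^ 2 * sin t ^ 2)) t := by
  convert (((hasDerivAt_sin t).const_mul b).div_const a).arctan using 1
  field_simp

lemma Function.Periodic.intervalIntegral_neg_eq_two_mul {f : ℝ → ℝ} {T : ℝ}
    (hf : Periodic f T) (hint : ∀ a b, IntervalIntegrable f volume a b) :
    ∫ x in -T..T, f x = 2 * ∫ x in -(T / 2)..T / 2, f x := by
  have h := hf.intervalIntegral_add_zsmul_eq 2 (-T) hint
  rw [hf.intervalIntegral_add_eq (-T) (-(T / 2))] at h
  convert h using 3
  · rw [two_zsmul]; ring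
  · rw [zsmul_eq_mul, Int.cast_ofNat]; congr 2; ring

lemma periodic_abs_div_one_sub_sub_div_one_add (a b : ℝ) :
    Periodic (fun t => |a / (1 - b * cos t) - a / (1 + b * cos t)|) π := by
  intro t
  simp only [cos_add_pi, mul_neg, sub_neg_eq_add, ← sub_eq_add_neg]
  exact abs_sub_comm _ _

lemma continuous_abs_div_one_sub_sub_div_one_add (a : ℝ) {b : ℝ} (hb : |b| < 1) :
    Continuous (fun t => |a / (1 - b * cos t) - a / (1 + b * cos t)|) := by
  have hbcos (t : ℝ) : |b * cos t| < 1 :=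
    (abs_mul b (cos t)).trans_lt
      (mul_lt_one_of_nonneg_of_lt_one_left (abs_nonneg b) hb (abs_cos_le_one t))
  have hsub (t : ℝ) : 1 - b * cos t ≠ 0 := by linarith [(abs_lt.mp (hbcos t)).2]
  have hadd (t : ℝ) : 1 + b * cos t ≠ 0 := by linarith [(abs_lt.mp (hbcos t)).1]
  fun_prop (disch := first | exact hsub _ | exact hadd _)

lemma abs_lt_one_of_sq_add_sq_eq_one {a b : ℝ} (ha : a ≠ 0) (hab : a ^ 2 + b ^ 2 = 1) :
    |b| < 1 :=
  (sq_lt_one_iff_abs_lt_one b).mp (by nlinarith [sq_pos_of_ne_zero ha])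

lemma integral_abs_div_one_sub_sub_div_one_add_of_sq_add_sq_eq_one {A B : ℝ} (hA : 0 < A)
    (hB : 0 ≤ B) (hAB : A ^ 2 + B ^ 2 = 1) :
    ∫ t in -(π / 2)..π / 2, |A / (1 - B * cos t) - A / (1 + B * cos t)| =
      4 * arctan (B / A) := by
  have hB₁ : |B| < 1 := abs_lt_one_of_sq_add_sq_eq_one hA.ne' hAB
  have hden (t : ℝ) : A ^ 2 + B ^ 2 * sin t ^ 2 ≠ 0 := by positivity
  calc ∫ t in -(π / 2)..π / 2, |A / (1 - B * cos t) - A / (1 + B * cos t)|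
      = ∫ t in -(π / 2)..π / 2, 2 * (A * B * cos t / (A ^ 2 + B ^ 2 * sin t ^ 2)) := by
        refine integral_congr fun t ht => ?_
        have hcos : 0 ≤ cos t :=
          cos_nonneg_of_mem_Icc (by rwa [Set.uIcc_of_le (by linarith [pi_pos])] at ht)
        have hBcos : |B * cos t| < 1 := by
          rw [abs_of_nonneg (mul_nonneg hB hcos)]
          nlinarith [abs_lt.mp hB₁, cos_le_one t]
        simp only [abs_div_one_sub_sub_div_one_add hA.le hBcos, abs_of_nonneg (mul_nonneg hB hcos)]
        rw [show 1 - (B * cos t) ^ 2 = A ^ 2 + B ^ 2 * sin t ^ 2 by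
          linear_combination -hAB - B ^ 2 * sin_sq_add_cos_sq t]
        ring
    _ = 2 * (arctan (B * sin (π / 2) / A) - arctan (B * sin (-(π / 2)) / A)) := by
        have hcont : Continuous fun t => A * B * cos t / (A ^ 2 + B ^ 2 * sin t ^ 2) := by
          fun_prop (disch := exact hden _)
        rw [intervalIntegral.integral_const_mul, integral_eq_sub_of_hasDerivAt
          (fun t _ => hasDerivAt_arctan_mul_sin_div B hA.ne' t) (hcont.intervalIntegrable _ _)]
    _ = 4 * arctan (B / A) := by
        rw [sin_neg, sin_pi_div_two, mul_neg, neg_div, arctan_neg, mul_one]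
        ring

theorem stmt15_general (A B : ℝ) (hA : 0 < A) (hB0 : 0 ≤ B) (hAB : A ^ 2 + B ^ 2 = 1) :
    (1 / (4 * π)) * ∫ t in (-π)..π,
        |A / (1 - B * Real.cos t) - A / (1 + B * Real.cos t)| =
      (2 / π) * Real.arctan (B / A) := by
  have hB : |B| < 1 := abs_lt_one_of_sq_add_sq_eq_one hA.ne' hAB
  rw [(periodic_abs_div_one_sub_sub_div_one_add A B).intervalIntegral_neg_eq_two_mul
      (continuous_abs_div_one_sub_sub_div_one_add A hB).intervalIntegrable,
    integral_abs_div_one_sub_sub_div_one_add_of_sq_add_sq_eq_one hA hB0 hAB]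
  field_simp

/-- for `A > 0`, `0 ≤ B < 1` with `A² + B² = 1`,
`(1/(4π)) ∫_{−π}^{π} |A/(1 − B cos t) − A/(1 + B cos t)| dt = (2/π) arctan(B/A)`. -/
theorem stmt15 (A B : ℝ) (hA : 0 < A) (hB0 : 0 ≤ B) (hB1 : B < 1) (hAB : A ^ 2 + B ^ 2 = 1) :
    (1 / (4 * π)) * ∫ t in (-π)..π,
        |A / (1 - B * Real.cos t) - A / (1 + B * Real.cos t)| =
      (2 / π) * Real.arctan (B / A) :=
  stmt15_general A B hA hB0 hAB
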